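/- arXiv:1501.05820 — 6 statements merged into one kernel-verified Lean document; each statement's English description precedes it below -/
import Mathlib

section
/- Let Γ be a group and let ν_1, ν_2 be unitary representations of Γ on complex Hilbert spaces H_1, H_2. Suppose there exists a nonzero compact operator T : H_1 → H_2 intertwining the two representations, i.e. ν_2(g) ∘ T = T ∘ ν_1(g) for all g ∈ Γ. Then both representations possess nonzero finite-dimensional subrepresentations: there exist nonzero finite-dimensional subspaces V_1 ⊆ H_1 and V_2 ⊆ H_2 with ν_1(g)V_1 = V_1 and ν_2(g)V_2 = V_2 for all g ∈ Γ. -/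
/-!
`T†T` and `TT†` are nonzero compact self-adjoint operators on `H₁` and `H₂`, and they commute
with `ν₁` and `ν₂` respectively, because the adjoint of an intertwiner between unitary
representations is again an intertwiner (`ν(g)† = ν(g⁻¹)`). By the spectral theorem for compact
self-adjoint operators, each has a nonzero eigenvalue with finite-dimensional eigenspace, and
eigenspaces of an operator commuting with a representation are invariant.
-/

open ContinuousLinearMap Module End

section

variable {𝕜 E F Γ : Type*} [RCLike 𝕜] [Group Γ]

lemma image_eq_of_forall_mapsTo [SeminormedAddCommGroup E] [NormedSpace 𝕜 E]
    (ν : Γ →* (E ≃ₗᵢ[𝕜] E)) {s : Set E} (h : ∀ g, Set.MapsTo (ν g) s s) (g : Γ) :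
    ν g '' s = s := by
  refine (h g).image_subset.antisymm fun w hw => ⟨ν g⁻¹ w, h g⁻¹ hw, ?_⟩
  rw [map_inv, LinearIsometryEquiv.inv_def, LinearIsometryEquiv.apply_symm_apply]

variable [NormedAddCommGroup E] [InnerProductSpace 𝕜 E]

lemma mapsTo_eigenspace_of_forall_comm (ν : Γ →* (E ≃ₗᵢ[𝕜] E)) {S : E →L[𝕜] E}
    (hcomm : ∀ g x, S (ν g x) = ν g (S x)) (μ : 𝕜) (g : Γ) :
    Set.MapsTo (ν g) (eigenspace (S : End 𝕜 E) μ) (eigenspace (S : End 𝕜 E) μ) := by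
  intro x hx
  rw [SetLike.mem_coe, mem_eigenspace_iff] at hx ⊢
  rw [coe_coe, hcomm, ← coe_coe, hx, map_smul]

theorem exists_finiteDimensional_invariant_of_isCompactOperator [CompleteSpace E]
    (ν : Γ →* (E ≃ₗᵢ[𝕜] E)) {S : E →L[𝕜] E} (hS0 : S ≠ 0) (hSc : IsCompactOperator S)
    (hS : S.IsSymmetric) (hcomm : ∀ g x, S (ν g x) = ν g (S x)) :
    ∃ V : Submodule 𝕜 E, V ≠ ⊥ ∧ FiniteDimensional 𝕜 V ∧ ∀ g, ν g '' (V : Set E) = V := by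
  obtain ⟨μ, hμ, hμ0⟩ : ∃ μ, HasEigenvalue (S : End 𝕜 E) μ ∧ μ ≠ 0 := by
    simpa using (eq_zero_of_forall_hasEigenvalue_eq_zero hSc hS).not.mpr hS0
  exact ⟨_, hasEigenvalue_iff.mp hμ, finite_dimensional_eigenspace hSc μ hμ0,
    image_eq_of_forall_mapsTo ν (mapsTo_eigenspace_of_forall_comm ν hcomm μ)⟩

variable [NormedAddCommGroup F] [InnerProductSpace 𝕜 F] [CompleteSpace E] [CompleteSpace F]

lemma adjoint_apply_of_intertwines (ν₁ : Γ →* (E ≃ₗᵢ[𝕜] E)) (ν₂ : Γ →* (F ≃ₗᵢ[𝕜] F))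
    {T : E →L[𝕜] F} (hT : ∀ g x, ν₂ g (T x) = T (ν₁ g x)) (g : Γ) (y : F) :
    ν₁ g (adjoint T y) = adjoint T (ν₂ g y) := by
  have h := congrArg adjoint
    (ext (hT g⁻¹) : (ν₂ g⁻¹ : F →L[𝕜] F) ∘L T = T ∘L (ν₁ g⁻¹ : E →L[𝕜] E))
  rw [adjoint_comp, adjoint_comp, LinearIsometryEquiv.adjoint_eq_symm,
    LinearIsometryEquiv.adjoint_eq_symm] at h
  simp only [map_inv, LinearIsometryEquiv.inv_def, LinearIsometryEquiv.symm_symm] at h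
  exact congr($h y).symm

lemma self_comp_adjoint_eq_zero_iff {T : E →L[𝕜] F} : T ∘L adjoint T = 0 ↔ T = 0 := by
  simpa using adjoint_comp_self_eq_zero_iff (A := adjoint T)

end

/-- If there is a nonzero compact operator `T : H₁ → H₂` intertwining two
unitary representations `ν₁`, `ν₂` of a group `Γ`, then both representations possess
nonzero finite-dimensional subrepresentations. -/
theorem exists_finiteDimensional_subrepresentations_of_compact_intertwiner
    {Γ : Type*} [Group Γ] {H₁ H₂ : Type*}
    [NormedAddCommGroup H₁] [InnerProductSpace ℂ H₁] [CompleteSpace H₁]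
    [NormedAddCommGroup H₂] [InnerProductSpace ℂ H₂] [CompleteSpace H₂]
    (ν₁ : Γ →* (H₁ ≃ₗᵢ[ℂ] H₁)) (ν₂ : Γ →* (H₂ ≃ₗᵢ[ℂ] H₂))
    (T : H₁ →L[ℂ] H₂) (hT0 : T ≠ 0) (hTc : IsCompactOperator T)
    (hint : ∀ (g : Γ) (x : H₁), ν₂ g (T x) = T (ν₁ g x)) :
    (∃ V₁ : Submodule ℂ H₁, V₁ ≠ ⊥ ∧ FiniteDimensional ℂ V₁ ∧
      ∀ g : Γ, (ν₁ g) '' (V₁ : Set H₁) = V₁) ∧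
    (∃ V₂ : Submodule ℂ H₂, V₂ ≠ ⊥ ∧ FiniteDimensional ℂ V₂ ∧
      ∀ g : Γ, (ν₂ g) '' (V₂ : Set H₂) = V₂) := by
  have hadj := adjoint_apply_of_intertwines ν₁ ν₂ hint
  constructor
  · refine exists_finiteDimensional_invariant_of_isCompactOperator ν₁
      (adjoint_comp_self_eq_zero_iff.not.mpr hT0) (hTc.clm_comp (adjoint T))
      (isPositive_adjoint_comp_self T).isSymmetric fun g x => ?_
    rw [comp_apply, comp_apply, ← hint, hadj]
  · refine exists_finiteDimensional_invariant_of_isCompactOperator ν₂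
      (self_comp_adjoint_eq_zero_iff.not.mpr hT0) (hTc.comp_clm (adjoint T))
      (isPositive_self_comp_adjoint T).isSymmetric fun g x => ?_
    rw [comp_apply, comp_apply, ← hadj, hint]
end

section
/- Let G be a group, K a subgroup, and ρ a unitary representation of G on a complex Hilbert space H. Let v ∈ H be a nonzero K-fixed vector and assume that every K-fixed vector in H is a scalar multiple of v. Then the closed G-cyclic span W of v (the closure of the linear span of {ρ(g)v : g ∈ G}) is irreducible: every closed subspace of W invariant under all operators ρ(g), g ∈ G, equals {0} or W. -/
/-!
Let `U` be a closed invariant subspace of the cyclic span `W` of `v`. Since `ρ` is unitary, `Uᗮ` is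
invariant as well, so the orthogonal projection `P` onto `U` commutes with every `ρ g`. Hence `P v`
is `K`-fixed, i.e. `P v = c • v`. If `c = 0` then `v ∈ Uᗮ`, so `W ≤ Uᗮ` and `U = ⊥`; otherwise
`v ∈ U`, so `W ≤ U`.
-/

section UnitaryRepresentation

variable {G 𝕜 E : Type*} [Group G] [RCLike 𝕜] [NormedAddCommGroup E] [InnerProductSpace 𝕜 E]
  (ρ : G →* (E ≃ₗᵢ[𝕜] E)) {U : Submodule 𝕜 E}

theorem orthogonal_invariant_of_invariant (hU : ∀ g : G, ∀ u ∈ U, ρ g u ∈ U) (g : G) :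
    ∀ x ∈ Uᗮ, ρ g x ∈ Uᗮ := by
  intro x hx u hu
  have hu' : ρ g (ρ g⁻¹ u) = u := by
    rw [map_inv]
    exact (ρ g).apply_symm_apply u
  calc inner 𝕜 u (ρ g x) = inner 𝕜 (ρ g (ρ g⁻¹ u)) (ρ g x) := by rw [hu']
    _ = inner 𝕜 (ρ g⁻¹ u) x := (ρ g).inner_map_map _ _
    _ = 0 := hx _ (hU g⁻¹ u hu)

theorem starProjection_map_apply_of_invariant [U.HasOrthogonalProjection]
    (hU : ∀ g : G, ∀ u ∈ U, ρ g u ∈ U) (g : G) (x : E) :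
    U.starProjection (ρ g x) = ρ g (U.starProjection x) := by
  refine Submodule.eq_starProjection_of_mem_orthogonal (hU g _ (U.starProjection_apply_mem x)) ?_
  rw [← map_sub]
  exact orthogonal_invariant_of_invariant ρ hU g _ (U.sub_starProjection_mem_orthogonal x)

theorem topologicalClosure_span_orbit_le {S : Submodule 𝕜 E} (hS : IsClosed (S : Set E))
    (hSinv : ∀ g : G, ∀ u ∈ S, ρ g u ∈ S) {v : E} (hv : v ∈ S) :
    (Submodule.span 𝕜 (Set.range fun g : G => ρ g v)).topologicalClosure ≤ S := by
  refine Submodule.topologicalClosure_minimal _ ?_ hS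
  rw [Submodule.span_le]
  rintro _ ⟨g, rfl⟩
  exact hSinv g v hv

end UnitaryRepresentation

theorem cyclicSpan_irreducible_of_unique_fixed_vector_general
    {G : Type*} [Group G] (K : Subgroup G) {H : Type*}
    [NormedAddCommGroup H] [InnerProductSpace ℂ H] [CompleteSpace H]
    (ρ : G →* (H ≃ₗᵢ[ℂ] H)) (v : H)
    (hvK : ∀ h ∈ K, ρ h v = v)
    (huniq : ∀ w : H, (∀ h ∈ K, ρ h w = w) → ∃ c : ℂ, w = c • v) :
    ∀ U : Submodule ℂ H, IsClosed (U : Set H) →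
      U ≤ (Submodule.span ℂ (Set.range fun g : G => ρ g v)).topologicalClosure →
      (∀ (g : G), ∀ u ∈ U, ρ g u ∈ U) →
      U = ⊥ ∨ U = (Submodule.span ℂ (Set.range fun g : G => ρ g v)).topologicalClosure := by
  intro U hUclosed hUle hUinv
  have : CompleteSpace U := hUclosed.completeSpace_coe
  obtain ⟨c, hc⟩ := huniq (U.starProjection v) fun h hh => by
    rw [← starProjection_map_apply_of_invariant ρ hUinv, hvK h hh]
  by_cases hc0 : c = 0
  · left
    have hvU : v ∈ Uᗮ := by
      rwa [hc0, zero_smul, Submodule.starProjection_apply_eq_zero_iff] at hc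
    have hW := topologicalClosure_span_orbit_le ρ U.isClosed_orthogonal
      (orthogonal_invariant_of_invariant ρ hUinv) hvU
    exact U.orthogonal_disjoint.eq_bot_of_le (hUle.trans hW)
  · right
    have hvU : v ∈ U := by
      rw [← inv_smul_smul₀ hc0 v, ← hc]
      exact U.smul_mem _ (U.starProjection_apply_mem v)
    exact hUle.antisymm (topologicalClosure_span_orbit_le ρ hUclosed hUinv hvU)

/-- If `v` is a nonzero `K`-fixed vector of a unitary representation `ρ`
of `G` and every `K`-fixed vector is a scalar multiple of `v`, then the closed
`G`-cyclic span of `v` is irreducible: its only closed `G`-invariant subspaces are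
`⊥` and the cyclic span itself. -/
theorem cyclicSpan_irreducible_of_unique_fixed_vector
    {G : Type*} [Group G] (K : Subgroup G) {H : Type*}
    [NormedAddCommGroup H] [InnerProductSpace ℂ H] [CompleteSpace H]
    (ρ : G →* (H ≃ₗᵢ[ℂ] H)) (v : H) (hv0 : v ≠ 0)
    (hvK : ∀ h ∈ K, ρ h v = v)
    (huniq : ∀ w : H, (∀ h ∈ K, ρ h w = w) → ∃ c : ℂ, w = c • v) :
    ∀ U : Submodule ℂ H, IsClosed (U : Set H) →
      U ≤ (Submodule.span ℂ (Set.range fun g : G => ρ g v)).topologicalClosure →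
      (∀ (g : G), ∀ u ∈ U, ρ g u ∈ U) →
      U = ⊥ ∨ U = (Submodule.span ℂ (Set.range fun g : G => ρ g v)).topologicalClosure :=
  cyclicSpan_irreducible_of_unique_fixed_vector_general K ρ v hvK huniq
end

section
/- Let G be a group, K a subgroup, ρ a unitary representation of G on a complex Hilbert space H, and P the orthogonal projection onto the subspace of K-fixed vectors. Let q, r ∈ G and suppose there is a sequence (h_j) in K such that (i) for every j the element h_j q h_j⁻¹ commutes with r in G, and (ii) the operators ρ(h_j) and ρ(h_j⁻¹) converge weakly to P, i.e. ⟨ρ(h_j)x, y⟩ → ⟨Px, y⟩ and ⟨ρ(h_j⁻¹)x, y⟩ → ⟨Px, y⟩ for all x, y ∈ H. Then P ρ(r) P ρ(q) P = P ρ(q) P ρ(r) P. -/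
/-!
For `K`-fixed `u, v` the coefficients `⟪ρ(h_j) ρ(q) u, ρ(r⁻¹) v⟫` and
`⟪ρ(h_j⁻¹) ρ(r) u, ρ(q⁻¹) v⟫` coincide: `h_j⁻¹` may be inserted next to `u` and `h_j` next to `v`,
after which both are `⟪ρ(h_j q h_j⁻¹ r) u, v⟫` because `h_j q h_j⁻¹` commutes with `r`.
Passing to the weak limit gives `⟪P ρ(q) u, ρ(r⁻¹) v⟫ = ⟪P ρ(r) u, ρ(q⁻¹) v⟫`; with `u = P x`,
`v = P y` this is the claim, because `P` is symmetric, being the weak limit both of `ρ(h_j)` and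
of their adjoints `ρ(h_j⁻¹)`.
-/

open Filter

namespace UnitaryRepresentation

variable {G 𝕜 H : Type*} [Group G] [RCLike 𝕜] [NormedAddCommGroup H] [InnerProductSpace 𝕜 H]
  (ρ : G →* (H ≃ₗᵢ[𝕜] H))

theorem apply_apply (a b : G) (u : H) : ρ a (ρ b u) = ρ (a * b) u := by
  rw [map_mul, LinearIsometryEquiv.coe_mul, Function.comp_apply]

theorem inner_apply_left (g : G) (u v : H) : inner 𝕜 (ρ g u) v = inner 𝕜 u (ρ g⁻¹ v) := by
  rw [LinearIsometryEquiv.inner_map_eq_flip, map_inv, LinearIsometryEquiv.coe_inv]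

theorem inner_apply_apply (a b : G) (u v : H) :
    inner 𝕜 (ρ a u) (ρ b v) = inner 𝕜 (ρ (b⁻¹ * a) u) v := by
  rw [inner_apply_left, inner_apply_left, apply_apply, mul_inv_rev, inv_inv]

theorem isSymmetric_of_tendsto_inner {ι : Type*} {l : Filter ι} [l.NeBot] {g : ι → G}
    {P : H →ₗ[𝕜] H}
    (hlim : ∀ x y : H, Tendsto (fun j => inner 𝕜 (ρ (g j) x) y) l (nhds (inner 𝕜 (P x) y)))
    (hlim' : ∀ x y : H, Tendsto (fun j => inner 𝕜 (ρ (g j)⁻¹ x) y) l (nhds (inner 𝕜 (P x) y))) :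
    P.IsSymmetric := by
  intro x y
  have hadj : Tendsto (fun j => inner 𝕜 (ρ (g j) x) y) l (nhds (inner 𝕜 x (P y))) := by
    simpa only [inner_apply_left, inv_inv, RCLike.star_def, inner_conj_symm] using (hlim' y x).star
  exact tendsto_nhds_unique (hlim x y) hadj

theorem inner_conj_apply_eq_of_commute {h q r : G} (hcomm : Commute (h * q * h⁻¹) r) {u v : H}
    (hu : ρ h⁻¹ u = u) (hv : ρ h v = v) :
    inner 𝕜 (ρ h (ρ q u)) (ρ r⁻¹ v) = inner 𝕜 (ρ h⁻¹ (ρ r u)) (ρ q⁻¹ v) := by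
  calc inner 𝕜 (ρ h (ρ q u)) (ρ r⁻¹ v)
      = inner 𝕜 (ρ (h * q * h⁻¹) u) (ρ r⁻¹ v) := by
        rw [← apply_apply, ← apply_apply, hu]
    _ = inner 𝕜 (ρ (h * q * h⁻¹ * r) u) (ρ h v) := by
        rw [inner_apply_apply, inv_inv, ← hcomm.eq, hv]
    _ = inner 𝕜 (ρ (q * h⁻¹ * r) u) v := by
        rw [inner_apply_apply]; group
    _ = inner 𝕜 (ρ h⁻¹ (ρ r u)) (ρ q⁻¹ v) := by
        rw [inner_apply_apply, inv_inv, apply_apply, mul_assoc]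

end UnitaryRepresentation

open UnitaryRepresentation in
theorem compressions_commute_of_weak_limit_general
    {G : Type*} [Group G] (K : Subgroup G) {H : Type*}
    [NormedAddCommGroup H] [InnerProductSpace ℂ H]
    (ρ : G →* (H ≃ₗᵢ[ℂ] H))
    (V : Submodule ℂ H) (hV : ∀ x : H, x ∈ V ↔ ∀ h ∈ K, ρ h x = x)
    (P : H →L[ℂ] H) (hPmem : ∀ x : H, P x ∈ V)
    (q r : G) (h : ℕ → G) (hhK : ∀ j, h j ∈ K)
    (hcomm : ∀ j, Commute (h j * q * (h j)⁻¹) r)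
    (hweak : ∀ x y : H,
      Tendsto (fun j => (inner ℂ (ρ (h j) x) y : ℂ)) atTop (nhds (inner ℂ (P x) y)))
    (hweak' : ∀ x y : H,
      Tendsto (fun j => (inner ℂ (ρ ((h j)⁻¹) x) y : ℂ)) atTop (nhds (inner ℂ (P x) y))) :
    ∀ x : H, P (ρ r (P (ρ q (P x)))) = P (ρ q (P (ρ r (P x)))) := by
  intro x
  have hsymm : (P : H →ₗ[ℂ] H).IsSymmetric := isSymmetric_of_tendsto_inner ρ hweak hweak'
  have hfix : ∀ u, ∀ k ∈ K, ρ k (P u) = P u := fun u => (hV (P u)).1 (hPmem u)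
  refine ext_inner_right ℂ fun y => ?_
  have hmid : inner ℂ (P (ρ q (P x))) (ρ r⁻¹ (P y)) = inner ℂ (P (ρ r (P x))) (ρ q⁻¹ (P y)) :=
    tendsto_nhds_unique (hweak _ _) <| (hweak' _ _).congr fun j =>
      (inner_conj_apply_eq_of_commute ρ (hcomm j) (hfix x _ (inv_mem (hhK j)))
        (hfix y _ (hhK j))).symm
  calc inner ℂ (P (ρ r (P (ρ q (P x))))) y
      = inner ℂ (ρ r (P (ρ q (P x)))) (P y) := hsymm _ _
    _ = inner ℂ (P (ρ q (P x))) (ρ r⁻¹ (P y)) := inner_apply_left ρ _ _ _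
    _ = inner ℂ (P (ρ r (P x))) (ρ q⁻¹ (P y)) := hmid
    _ = inner ℂ (ρ q (P (ρ r (P x)))) (P y) := (inner_apply_left ρ _ _ _).symm
    _ = inner ℂ (P (ρ q (P (ρ r (P x))))) y := (hsymm _ _).symm

/-- Let `P` be the orthogonal projection onto the `K`-fixed vectors of a
unitary representation `ρ` of `G`.  If `q, r ∈ G` admit a sequence `h_j ∈ K` such that
`h_j q h_j⁻¹` commutes with `r` and `ρ(h_j), ρ(h_j⁻¹) → P` weakly, then
`P ρ(r) P ρ(q) P = P ρ(q) P ρ(r) P`. -/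
theorem compressions_commute_of_weak_limit
    {G : Type*} [Group G] (K : Subgroup G) {H : Type*}
    [NormedAddCommGroup H] [InnerProductSpace ℂ H] [CompleteSpace H]
    (ρ : G →* (H ≃ₗᵢ[ℂ] H))
    (V : Submodule ℂ H) (hV : ∀ x : H, x ∈ V ↔ ∀ h ∈ K, ρ h x = x)
    (P : H →L[ℂ] H) (hPmem : ∀ x : H, P x ∈ V) (hPfix : ∀ x ∈ V, P x = x)
    (hPorth : ∀ x : H, x - P x ∈ Vᗮ)
    (q r : G) (h : ℕ → G) (hhK : ∀ j, h j ∈ K)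
    (hcomm : ∀ j, Commute (h j * q * (h j)⁻¹) r)
    (hweak : ∀ x y : H,
      Tendsto (fun j => (inner ℂ (ρ (h j) x) y : ℂ)) atTop (nhds (inner ℂ (P x) y)))
    (hweak' : ∀ x y : H,
      Tendsto (fun j => (inner ℂ (ρ ((h j)⁻¹) x) y : ℂ)) atTop (nhds (inner ℂ (P x) y))) :
    ∀ x : H, P (ρ r (P (ρ q (P x)))) = P (ρ q (P (ρ r (P x)))) :=
  compressions_commute_of_weak_limit_general K ρ V hV P hPmem q r h hhK hcomm hweak hweak'
end

section
/- Let H be a complex Hilbert space of dimension greater than 1 (possibly infinite), and let S be a set of bounded linear operators on H that pairwise commute and is closed under taking adjoints (A ∈ S implies A* ∈ S). Then there exists a closed subspace W of H with W ≠ {0} and W ≠ H that is invariant under every operator in S. -/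
/-!
If every operator in `S` is scalar, any line is invariant. Otherwise some `A ∈ S` is not scalar,
and then its real or imaginary part `T` is a non-scalar self-adjoint operator which, as `S` is
closed under adjoints, commutes with `S`. The spectrum of `T` contains two points `x < y`; for `m`
between them the positive and negative parts of `T - m` are nonzero with product zero, and they
commute with `S`, so the kernel of `(T - m)⁺` is a nontrivial closed invariant subspace.
-/

open ComplexStarModule

section StarAlgebra

variable {A : Type*} [Ring A] [StarRing A] [Algebra ℂ A] [StarModule ℂ A]

lemma exists_isSelfAdjoint_ne_algebraMap_commute {a : A} (ha : ∀ c : ℂ, a ≠ algebraMap ℂ A c) :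
    ∃ t : A, IsSelfAdjoint t ∧ (∀ r : ℝ, t ≠ algebraMap ℝ A r) ∧
      ∀ b, Commute a b → Commute (star a) b → Commute t b := by
  by_cases hre : ∃ r : ℝ, (ℜ a : A) = algebraMap ℝ A r
  · obtain ⟨r, hr⟩ := hre
    refine ⟨ℑ a, (ℑ a).prop, fun s hs => ha (r + s * Complex.I) ?_, fun b h₁ h₂ => ?_⟩
    · rw [← realPart_add_I_smul_imaginaryPart a, hr, hs]
      simp only [Algebra.algebraMap_eq_smul_one, ← Complex.coe_smul, smul_smul, map_add,
        mul_comm]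
    · rw [imaginaryPart_apply_coe]
      exact ((h₁.sub_left h₂).smul_left _).smul_left _
  · push Not at hre
    refine ⟨ℜ a, (ℜ a).prop, hre, fun b h₁ h₂ => ?_⟩
    rw [realPart_apply_coe]
    exact (h₁.add_left h₂).smul_left _

end StarAlgebra

section CStarAlgebra

variable {A : Type*} [CStarAlgebra A] [PartialOrder A] [StarOrderedRing A]

lemma IsSelfAdjoint.exists_not_le_algebraMap_and_not_algebraMap_le {a : A} (ha : IsSelfAdjoint a)
    (hne : ∀ r : ℝ, a ≠ algebraMap ℝ A r) :
    ∃ m : ℝ, ¬ a ≤ algebraMap ℝ A m ∧ ¬ algebraMap ℝ A m ≤ a := by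
  obtain ⟨x, hx, y, hy, hxy⟩ : ∃ x ∈ spectrum ℝ a, ∃ y ∈ spectrum ℝ a, x < y := by
    by_contra! h
    rcases (spectrum ℝ a).eq_empty_or_nonempty with hσ | ⟨r, hr⟩
    · exact hne 0 (CFC.eq_algebraMap_of_spectrum_subset_singleton a 0 (by simp [hσ]))
    · exact hne r (CFC.eq_algebraMap_of_spectrum_subset_singleton a r
        fun s hs => le_antisymm (h r hr s hs) (h s hs r hr))
  refine ⟨(x + y) / 2, fun hle => ?_, fun hle => ?_⟩
  · have := (le_algebraMap_iff_spectrum_le ha).mp hle y hy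
    linarith
  · have := (algebraMap_le_iff_le_spectrum ha).mp hle x hx
    linarith

lemma IsSelfAdjoint.exists_ne_zero_mul_eq_zero_commute {a : A} (ha : IsSelfAdjoint a)
    (hne : ∀ r : ℝ, a ≠ algebraMap ℝ A r) :
    ∃ p q : A, p ≠ 0 ∧ q ≠ 0 ∧ p * q = 0 ∧ ∀ b, Commute a b → Commute p b := by
  obtain ⟨m, hnle, hnge⟩ := ha.exists_not_le_algebraMap_and_not_algebraMap_le hne
  set t := a - algebraMap ℝ A m
  have ht : IsSelfAdjoint t := ha.sub (.algebraMap A (.all m))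
  refine ⟨t⁺, t⁻, ?_, ?_, CFC.posPart_mul_negPart t, fun b hb => ?_⟩
  · rwa [ne_eq, CFC.posPart_eq_zero_iff t, sub_nonpos]
  · rwa [ne_eq, CFC.negPart_eq_zero_iff t, sub_nonneg]
  · exact (hb.sub_left (Algebra.commute_algebraMap_left m b)).cfcₙ_real _

end CStarAlgebra

namespace ContinuousLinearMap

lemma exists_isClosed_invariant_ne_bot_ne_top_of_mul_eq_zero {R E : Type*} [Ring R]
    [AddCommGroup E] [TopologicalSpace E] [Module R E] [T1Space E] {p q : E →L[R] E} (hp : p ≠ 0)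
    (hq : q ≠ 0) (hpq : p * q = 0) :
    ∃ W : Submodule R E, IsClosed (W : Set E) ∧ W ≠ ⊥ ∧ W ≠ ⊤ ∧
      ∀ b : E →L[R] E, Commute p b → ∀ w ∈ W, b w ∈ W := by
  refine ⟨LinearMap.ker (p : E →ₗ[R] E), isClosed_ker p, ?_, ?_, fun b hb w hw => ?_⟩
  · obtain ⟨x, hx⟩ : ∃ x, q x ≠ 0 := by
      by_contra! h
      exact hq (ext h)
    exact (Submodule.ne_bot_iff _).mpr ⟨q x, by simpa using congr($hpq x), hx⟩
  · exact fun h => hp (coe_injective (LinearMap.ker_eq_top.mp h))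
  · have hpw : p w = 0 := hw
    simpa [hpw] using DFunLike.congr_fun hb.eq w

end ContinuousLinearMap

lemma exists_isClosed_submodule_ne_bot_ne_top {𝕜 E : Type*} [NontriviallyNormedField 𝕜]
    [CompleteSpace 𝕜] [NormedAddCommGroup E] [NormedSpace 𝕜 E] (h : 1 < Module.rank 𝕜 E) :
    ∃ W : Submodule 𝕜 E, IsClosed (W : Set E) ∧ W ≠ ⊥ ∧ W ≠ ⊤ := by
  have : Nontrivial E := rank_pos_iff_nontrivial.mp (zero_lt_one.trans h)
  obtain ⟨x, hx⟩ := exists_ne (0 : E)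
  refine ⟨𝕜 ∙ x, Submodule.closed_of_finiteDimensional _, by simpa using hx, fun htop => ?_⟩
  rw [← rank_top 𝕜 E, ← htop] at h
  exact h.not_ge ((rank_span_le _).trans (by simp))

/-- A pairwise commuting, adjoint-closed set of bounded operators on a
complex Hilbert space of dimension `> 1` has a common nontrivial closed invariant
subspace. -/
theorem exists_nontrivial_invariant_subspace_of_commuting_selfAdjoint_family
    {H : Type*} [NormedAddCommGroup H] [InnerProductSpace ℂ H] [CompleteSpace H]
    (hdim : 1 < Module.rank ℂ H)
    (S : Set (H →L[ℂ] H))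
    (hcomm : ∀ A ∈ S, ∀ B ∈ S, Commute A B)
    (hadj : ∀ A ∈ S, ContinuousLinearMap.adjoint A ∈ S) :
    ∃ W : Submodule ℂ H, IsClosed (W : Set H) ∧ W ≠ ⊥ ∧ W ≠ ⊤ ∧
      ∀ A ∈ S, ∀ w ∈ W, A w ∈ W := by
  by_cases hscalar : ∀ A ∈ S, ∃ c : ℂ, A = algebraMap ℂ _ c
  · obtain ⟨W, hWc, hW₀, hW₁⟩ := exists_isClosed_submodule_ne_bot_ne_top hdim
    refine ⟨W, hWc, hW₀, hW₁, fun A hA w hw => ?_⟩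
    obtain ⟨c, rfl⟩ := hscalar A hA
    simpa [Algebra.algebraMap_eq_smul_one] using W.smul_mem c hw
  push Not at hscalar
  obtain ⟨A, hA, hAns⟩ := hscalar
  obtain ⟨T, hT, hTns, hTcomm⟩ := exists_isSelfAdjoint_ne_algebraMap_commute hAns
  obtain ⟨p, q, hp, hq, hpq, hpcomm⟩ := hT.exists_ne_zero_mul_eq_zero_commute hTns
  obtain ⟨W, hWc, hW₀, hW₁, hWinv⟩ :=
    ContinuousLinearMap.exists_isClosed_invariant_ne_bot_ne_top_of_mul_eq_zero hp hq hpq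
  refine ⟨W, hWc, hW₀, hW₁, fun B hB => hWinv B (hpcomm B (hTcomm B (hcomm A hA B hB) ?_))⟩
  rw [ContinuousLinearMap.star_eq_adjoint]
  exact hcomm _ (hadj A hA) B hB
end

section
/- Let G be a group, K a subgroup, ρ an irreducible unitary representation of G on a complex Hilbert space H, and P the orthogonal projection onto the subspace V of K-fixed vectors. If the compressed operators P ρ(g) P pairwise commute, i.e. P ρ(g) P ρ(g') P = P ρ(g') P ρ(g) P for all g, g' ∈ G, then the subspace V of K-fixed vectors has dimension at most 1. -/
/-! The compressions `A g = P ρ(g) P`, viewed as operators on `V`, satisfy `(A g)⋆ = A g⁻¹`, so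
they form a commuting family of normal operators. This family has no closed invariant subspace
`0 ≠ W ≠ V`: the vectors orthogonal to the orbit `ρ(G) W` form a closed `ρ`-invariant subspace,
which is `0` or `H` by irreducibility, and contains `V ⊖ W`. Schur's lemma then makes every
`A g` a scalar: two points of the spectrum of `A g` give continuous `f`, `g` with `f g = 0`,
`f(A g) ≠ 0 ≠ g(A g)`, and `ker g(A g)` would be a nontrivial closed invariant subspace.
So every line in `V` is invariant, hence equal to `V`. -/

open scoped InnerProductSpace

def TopologicallyIrreducible {𝕜 E ι : Type*} [Semiring 𝕜] [AddCommMonoid E] [Module 𝕜 E]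
    [TopologicalSpace E] (T : ι → E →L[𝕜] E) : Prop :=
  ∀ W : Submodule 𝕜 E, IsClosed (W : Set E) → (∀ i, ∀ w ∈ W, T i w ∈ W) → W = ⊥ ∨ W = ⊤

theorem exists_continuous_ne_zero_mul_eq_zero {X : Type*} [PseudoMetricSpace X] {x y : X}
    (hxy : dist x y ≠ 0) :
    ∃ f g : X → ℂ, Continuous f ∧ Continuous g ∧ f x ≠ 0 ∧ g y ≠ 0 ∧ ∀ z, f z * g z = 0 := by
  refine ⟨fun z => ((max (dist z y - dist z x) 0 : ℝ) : ℂ),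
    fun z => ((max (dist z x - dist z y) 0 : ℝ) : ℂ), by fun_prop, by fun_prop, ?_, ?_, ?_⟩
  · simpa [dist_comm] using hxy
  · simpa [dist_comm] using hxy
  · intro z
    rcases le_total (dist z y) (dist z x) with h | h <;> simp [h]

namespace TopologicallyIrreducible

variable {𝕜 E ι : Type*}

theorem eq_zero_of_commute_of_apply_eq_zero [Ring 𝕜] [AddCommGroup E] [Module 𝕜 E]
    [TopologicalSpace E] [T1Space E] {T : ι → E →L[𝕜] E} (hT : TopologicallyIrreducible T)
    {c : E →L[𝕜] E} (hc : ∀ i, Commute (T i) c) {x : E} (hx : x ≠ 0) (hcx : c x = 0) :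
    c = 0 := by
  have hinv : ∀ i, ∀ w ∈ (c : E →ₗ[𝕜] E).ker, T i w ∈ (c : E →ₗ[𝕜] E).ker := fun i w hw => by
    simp only [LinearMap.mem_ker, ContinuousLinearMap.coe_coe] at hw ⊢
    rw [← mul_apply_eq_comp, ← (hc i).eq, mul_apply_eq_comp, hw, map_zero]
  have hker : (c : E →ₗ[𝕜] E).ker ≠ ⊥ := (Submodule.ne_bot_iff _).mpr ⟨x, hcx, hx⟩
  have htop := (hT _ c.isClosed_ker hinv).resolve_left hker
  ext y
  simpa using (htop ▸ Submodule.mem_top : y ∈ (c : E →ₗ[𝕜] E).ker)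

variable [NormedAddCommGroup E] [InnerProductSpace ℂ E] [CompleteSpace E] {T : ι → E →L[ℂ] E}

theorem exists_eq_algebraMap_of_isStarNormal [Nontrivial E] (hT : TopologicallyIrreducible T)
    {a : E →L[ℂ] E} [IsStarNormal a] (ha : ∀ i, Commute a (T i))
    (ha' : ∀ i, Commute (star a) (T i)) : ∃ c : ℂ, a = algebraMap ℂ _ c := by
  obtain ⟨z, hz⟩ := spectrum.nonempty a
  refine ⟨z, CFC.eq_algebraMap_of_spectrum_subset_singleton a z fun w hw => ?_⟩
  by_contra hwz
  obtain ⟨f, g, hf, hg, hfw, hgz, hfg⟩ :=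
    exists_continuous_ne_zero_mul_eq_zero (dist_ne_zero.mpr hwz)
  have cfc_ne_zero :
      ∀ {h : ℂ → ℂ} {x}, Continuous h → x ∈ spectrum ℂ a → h x ≠ 0 → cfc h a ≠ 0 :=
    fun hh hx hhx h0 => hhx <| by
      simpa using (eqOn_of_cfc_eq_cfc (h0.trans (cfc_zero ℂ a).symm) hh.continuousOn) hx
  obtain ⟨x, hx⟩ := DFunLike.ne_iff.mp (cfc_ne_zero hf hw hfw)
  have hgf : cfc g a (cfc f a x) = 0 := by
    rw [← mul_apply_eq_comp, ← cfc_mul g f a,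
      show (fun z => g z * f z) = 0 from funext fun z => by rw [mul_comm, hfg, Pi.zero_apply],
      cfc_zero, zero_apply]
  exact cfc_ne_zero hg hz hgz
    (hT.eq_zero_of_commute_of_apply_eq_zero (fun i => ((ha i).cfc (ha' i) g).symm) hx hgf)

theorem rank_le_one_of_commute (hT : TopologicallyIrreducible T)
    (hcomm : ∀ i j, Commute (T i) (T j)) (hstar : ∀ i, ∃ j, star (T i) = T j) :
    Module.rank ℂ E ≤ 1 := by
  rcases subsingleton_or_nontrivial E with hE | hE
  · simp
  obtain ⟨v, hv⟩ := exists_ne (0 : E)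
  have hscalar : ∀ i, ∃ c : ℂ, T i = algebraMap ℂ _ c := fun i => by
    obtain ⟨j, hj⟩ := hstar i
    have : IsStarNormal (T i) := ⟨by rw [hj]; exact hcomm j i⟩
    exact hT.exists_eq_algebraMap_of_isStarNormal (hcomm i) (hj ▸ hcomm j)
  have hinv : ∀ i, ∀ w ∈ ℂ ∙ v, T i w ∈ ℂ ∙ v := fun i w hw => by
    obtain ⟨c, hc⟩ := hscalar i
    simpa [hc, Algebra.algebraMap_eq_smul_one] using (ℂ ∙ v).smul_mem c hw
  have hspan : (ℂ ∙ v) = ⊤ :=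
    (hT _ (Submodule.closed_of_finiteDimensional _) hinv).resolve_left (by simpa using hv)
  exact rank_le_one_iff.mpr
    ⟨v, fun w => Submodule.mem_span_singleton.mp (hspan ▸ Submodule.mem_top)⟩

end TopologicallyIrreducible

section Compression

variable {𝕜 G H : Type*} [RCLike 𝕜] [Group G] [NormedAddCommGroup H] [InnerProductSpace 𝕜 H]
  (ρ : G →* (H ≃ₗᵢ[𝕜] H)) (V : Submodule 𝕜 H) [V.HasOrthogonalProjection]

noncomputable def compression (g : G) : V →L[𝕜] V :=
  V.orthogonalProjectionOnto ∘L (ρ g : H →L[𝕜] H) ∘L V.subtypeL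

theorem coe_compression_apply (g : G) (x : V) :
    (compression ρ V g x : H) = V.starProjection (ρ g x) :=
  rfl

theorem inner_compression_apply_left (g : G) (x y : V) :
    ⟪compression ρ V g x, y⟫_𝕜 = ⟪ρ g x, (y : H)⟫_𝕜 :=
  V.inner_orthogonalProjectionOnto_eq_of_mem_right y _

theorem star_compression [CompleteSpace H] [CompleteSpace V] (g : G) :
    star (compression ρ V g) = compression ρ V g⁻¹ := by
  simp [ContinuousLinearMap.star_eq_adjoint, compression, ContinuousLinearMap.adjoint_comp,
    Submodule.adjoint_subtypeL, Submodule.adjoint_orthogonalProjectionOnto,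
    ContinuousLinearMap.comp_assoc, map_inv, LinearIsometryEquiv.inv_def]

theorem topologicallyIrreducible_compression [CompleteSpace V]
    (hρ : TopologicallyIrreducible fun g => (ρ g : H →L[𝕜] H)) :
    TopologicallyIrreducible (compression ρ V) := by
  intro W hW hWinv
  let S : Submodule 𝕜 H := ⨅ g, (W.map ((ρ g : H →ₗ[𝕜] H) ∘ₗ V.subtype))ᗮ
  have hS : ∀ x, x ∈ S ↔ ∀ g, ∀ w ∈ W, ⟪ρ g w, x⟫_𝕜 = 0 := fun x => by
    simp only [S, Submodule.mem_iInf, Submodule.mem_orthogonal, Submodule.mem_map,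
      forall_exists_index, and_imp, forall_apply_eq_imp_iff₂]
    rfl
  have hSclosed : IsClosed (S : Set H) := by
    simpa [S, Submodule.coe_iInf] using isClosed_iInter fun g => Submodule.isClosed_orthogonal _
  have hSinv : ∀ g, ∀ x ∈ S, ρ g x ∈ S := by
    intro g x hx
    rw [hS] at hx ⊢
    intro g' w hw
    calc ⟪ρ g' w, ρ g x⟫_𝕜 = ⟪ρ g (ρ (g⁻¹ * g') w), ρ g x⟫_𝕜 := by
          rw [← Function.comp_apply (f := ρ g), ← LinearIsometryEquiv.coe_mul, ← map_mul,
            mul_inv_cancel_left]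
      _ = 0 := by rw [LinearIsometryEquiv.inner_map_map, hx _ w hw]
  rcases hρ S hSclosed hSinv with hbot | htop
  · right
    have : CompleteSpace W := hW.completeSpace_coe
    rw [← Submodule.orthogonal_eq_bot_iff, Submodule.eq_bot_iff]
    intro v hv
    have : (v : H) ∈ S := (hS _).2 fun g w hw => by
      rw [← inner_compression_apply_left]
      exact inner_eq_zero_symm.1 ((Submodule.mem_orthogonal' _ _).1 hv _ (hWinv g w hw))
    rw [hbot] at this
    exact Subtype.ext (by simpa using this)
  · left
    rw [Submodule.eq_bot_iff]
    intro w hw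
    simpa using (hS w).1 (htop ▸ Submodule.mem_top) 1 w hw

end Compression

theorem rank_fixed_le_one_of_commuting_compressions_general
    {G : Type*} [Group G] {H : Type*}
    [NormedAddCommGroup H] [InnerProductSpace ℂ H] [CompleteSpace H]
    (ρ : G →* (H ≃ₗᵢ[ℂ] H))
    (hirr : ∀ W : Submodule ℂ H, IsClosed (W : Set H) →
      (∀ (g : G), ∀ w ∈ W, ρ g w ∈ W) → W = ⊥ ∨ W = ⊤)
    (V : Submodule ℂ H)
    (P : H →L[ℂ] H) (hPmem : ∀ x : H, P x ∈ V)
    (hPorth : ∀ x : H, x - P x ∈ Vᗮ)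
    (hcomm : ∀ (g g' : G) (x : H),
      P (ρ g (P (ρ g' (P x)))) = P (ρ g' (P (ρ g (P x))))) :
    Module.rank ℂ V ≤ 1 := by
  have : V.HasOrthogonalProjection := ⟨fun x => ⟨P x, hPmem x, hPorth x⟩⟩
  have : CompleteSpace V := (V.orthogonal_orthogonal ▸ Vᗮ.isClosed_orthogonal).completeSpace_coe
  have hP : ∀ x, P x = V.starProjection x := fun x =>
    (V.eq_starProjection_of_mem_orthogonal (hPmem x) (hPorth x)).symm
  have hA : ∀ g g', Commute (compression ρ V g) (compression ρ V g') := fun g g' => by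
    ext x
    simpa [mul_apply_eq_comp, coe_compression_apply, hP] using hcomm g g' x
  exact (topologicallyIrreducible_compression ρ V hirr).rank_le_one_of_commute hA
    fun g => ⟨g⁻¹, star_compression ρ V g⟩

/-- If `ρ` is an irreducible unitary representation of `G` and the
compressions `P ρ(g) P` (where `P` is the orthogonal projection onto the subspace `V`
of `K`-fixed vectors) pairwise commute, then `dim V ≤ 1`. -/
theorem rank_fixed_le_one_of_commuting_compressions
    {G : Type*} [Group G] (K : Subgroup G) {H : Type*}
    [NormedAddCommGroup H] [InnerProductSpace ℂ H] [CompleteSpace H]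
    (ρ : G →* (H ≃ₗᵢ[ℂ] H))
    (hirr : ∀ W : Submodule ℂ H, IsClosed (W : Set H) →
      (∀ (g : G), ∀ w ∈ W, ρ g w ∈ W) → W = ⊥ ∨ W = ⊤)
    (V : Submodule ℂ H) (hV : ∀ x : H, x ∈ V ↔ ∀ h ∈ K, ρ h x = x)
    (P : H →L[ℂ] H) (hPmem : ∀ x : H, P x ∈ V) (hPfix : ∀ x ∈ V, P x = x)
    (hPorth : ∀ x : H, x - P x ∈ Vᗮ)
    (hcomm : ∀ (g g' : G) (x : H),
      P (ρ g (P (ρ g' (P x)))) = P (ρ g' (P (ρ g (P x))))) :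
    Module.rank ℂ V ≤ 1 :=
  rank_fixed_le_one_of_commuting_compressions_general ρ hirr V P hPmem hPorth hcomm
end

section
/- Let G be a group, K a subgroup, ρ an irreducible unitary representation of G on a complex Hilbert space H, and P the orthogonal projection onto the subspace V of K-fixed vectors. Let W be a nonzero closed subspace of V such that P ρ(g) w ∈ W for all g ∈ G and w ∈ W. Then W = V. -/
/-- Let `ρ` be an irreducible unitary representation of `G`, `V` the
subspace of `K`-fixed vectors and `P` the orthogonal projection onto `V`.  If `W` is a
nonzero closed subspace of `V` with `P (ρ g w) ∈ W` for all `g ∈ G`, `w ∈ W`, then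
`W = V`. -/
theorem compression_invariant_subspace_eq_fixed_space
    {G : Type*} [Group G] (K : Subgroup G) {H : Type*}
    [NormedAddCommGroup H] [InnerProductSpace ℂ H] [CompleteSpace H]
    (ρ : G →* (H ≃ₗᵢ[ℂ] H))
    (hirr : ∀ Z : Submodule ℂ H, IsClosed (Z : Set H) →
      (∀ (g : G), ∀ z ∈ Z, ρ g z ∈ Z) → Z = ⊥ ∨ Z = ⊤)
    (V : Submodule ℂ H) (hV : ∀ x : H, x ∈ V ↔ ∀ h ∈ K, ρ h x = x)
    (P : H →L[ℂ] H) (hPmem : ∀ x : H, P x ∈ V) (hPfix : ∀ x ∈ V, P x = x)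
    (hPorth : ∀ x : H, x - P x ∈ Vᗮ)
    (W : Submodule ℂ H) (hWV : W ≤ V) (hW0 : W ≠ ⊥) (hWcl : IsClosed (W : Set H))
    (hWinv : ∀ (g : G), ∀ w ∈ W, P (ρ g w) ∈ W) :
    W = V := by
  -- S : the G-orbit of W
  set S : Set H := {x | ∃ g : G, ∃ w ∈ W, x = ρ g w} with hS
  set Z : Submodule ℂ H := (Submodule.span ℂ S).topologicalClosure with hZ
  -- span S is mapped into itself by each ρ g
  have hmap : ∀ g : G, ∀ z ∈ Submodule.span ℂ S, ρ g z ∈ Submodule.span ℂ S := by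
    intro g z hz
    induction hz using Submodule.span_induction with
    | mem x hx =>
      obtain ⟨g', w, hw, rfl⟩ := hx
      refine Submodule.subset_span ⟨g * g', w, hw, ?_⟩
      simp [map_mul]
    | zero => simp
    | add x y _ _ hx hy => rw [map_add]; exact Submodule.add_mem _ hx hy
    | smul c x _ hx => rw [map_smul]; exact Submodule.smul_mem _ c hx
  -- Z is G-invariant
  have hZinv : ∀ g : G, ∀ z ∈ Z, ρ g z ∈ Z := by
    intro g z hz
    have hc : Continuous (ρ g) := (ρ g).continuous
    exact map_mem_closure hc hz (fun x hx => hmap g x hx)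
  have hWZ : W ≤ Z := by
    intro w hw
    refine Submodule.le_topologicalClosure _ ?_
    exact Submodule.subset_span ⟨1, w, hw, by simp⟩
  have hZne : Z ≠ ⊥ := fun h => hW0 (le_bot_iff.mp (h ▸ hWZ))
  have hZtop : Z = ⊤ := by
    rcases hirr Z (Submodule.isClosed_topologicalClosure _) hZinv with h | h
    · exact absurd h hZne
    · exact h
  -- P maps span S into W
  have hPspan : ∀ z ∈ Submodule.span ℂ S, P z ∈ W := by
    intro z hz
    induction hz using Submodule.span_induction with
    | mem x hx =>
      obtain ⟨g, w, hw, rfl⟩ := hx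
      exact hWinv g w hw
    | zero => simp
    | add x y _ _ hx hy => rw [map_add]; exact Submodule.add_mem _ hx hy
    | smul c x _ hx => rw [map_smul]; exact Submodule.smul_mem _ c hx
  refine le_antisymm hWV ?_
  intro v hv
  have hvZ : v ∈ Z := hZtop ▸ Submodule.mem_top
  have hPv : P v ∈ closure (W : Set H) :=
    map_mem_closure P.continuous hvZ (fun x hx => hPspan x hx)
  rw [hWcl.closure_eq] at hPv
  rwa [hPfix v hv] at hPv
end
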